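/- In the Hopf algebra H_2^i, the antipode satisfies S(e_m) = e_{-m}, S(e_mE) = (-i)^m e_{2-m}E, S(e_mF) = -(i)^m e_{2-m}F for all m ∈ ℤ/4ℤ, where e_m = (1/4)Σ_k i^{mk}K^k. -/
import Mathlib


noncomputable section


namespace Stmt17

def X (n : Fin 3) : FreeAlgebra ℂ (Fin 3) := FreeAlgebra.ι ℂ n

/-- Relations of `H_2^i`: `KE = -EK`, `KF = -FK`, `[E,F] = (K - K⁻¹)/(2i)` (with
`K⁻¹ = K³`), `E² = 0`, `F² = 0`, `K⁴ = 1`. -/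
inductive rel : FreeAlgebra ℂ (Fin 3) → FreeAlgebra ℂ (Fin 3) → Prop
  | ke : rel (X 0 * X 1) (-(X 1 * X 0))
  | kf : rel (X 0 * X 2) (-(X 2 * X 0))
  | ef : rel (X 1 * X 2 - X 2 * X 1) ((2 * Complex.I)⁻¹ • (X 0 - X 0 ^ 3))
  | e2 : rel (X 1 ^ 2) 0
  | f2 : rel (X 2 ^ 2) 0
  | k4 : rel (X 0 ^ 4) 1

/-- The algebra `H_2^i`. -/
abbrev H2 := RingQuot rel

def K : H2 := RingQuot.mkAlgHom ℂ rel (X 0)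
def E : H2 := RingQuot.mkAlgHom ℂ rel (X 1)
def F : H2 := RingQuot.mkAlgHom ℂ rel (X 2)

/-- `e_m = (1/4) Σ_k i^{mk} K^k`. -/
def e (m : ZMod 4) : H2 := (4 : ℂ)⁻¹ • ∑ k : ZMod 4, Complex.I ^ (m * k).val • K ^ k.val

lemma sum_zmod4 (f : ZMod 4 → H2) : ∑ k : ZMod 4, f k = f 0 + f 1 + f 2 + f 3 := by
  have huniv : (Finset.univ : Finset (ZMod 4)) = {0, 1, 2, 3} := by decide
  rw [huniv]
  rw [show ({0,1,2,3} : Finset (ZMod 4)) = insert 0 (insert 1 (insert 2 {3})) from rfl]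
  rw [Finset.sum_insert (by decide), Finset.sum_insert (by decide),
    Finset.sum_insert (by decide), Finset.sum_singleton, add_assoc, add_assoc]

lemma zv0 : ((0:ZMod 4)).val = 0 := by decide
lemma zv1 : ((1:ZMod 4)).val = 1 := by decide
lemma zv2 : ((2:ZMod 4)).val = 2 := by decide
lemma zv3 : ((3:ZMod 4)).val = 3 := by decide

lemma zv4 : ((4:ZMod 4)).val = 0 := by decide
lemma zv6 : ((6:ZMod 4)).val = 2 := by decide
lemma zv9 : ((9:ZMod 4)).val = 1 := by decide

lemma e_expand (m : ZMod 4) :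
    e m = (4:ℂ)⁻¹ • (Complex.I ^ (m*0 : ZMod 4).val • (1:H2)
      + Complex.I ^ (m*1 : ZMod 4).val • K + Complex.I ^ (m*2 : ZMod 4).val • K^2
      + Complex.I ^ (m*3 : ZMod 4).val • K^3) := by
  rw [e, sum_zmod4]
  norm_num [show ((1:ZMod 4)).val = 1 by decide, show ((2:ZMod 4)).val = 2 by decide,
    show ((3:ZMod 4)).val = 3 by decide]

lemma e0' : e 0 = (4:ℂ)⁻¹ • ((1:ℂ)•(1:H2) + (1:ℂ)•K + (1:ℂ)•K^2 + (1:ℂ)•K^3) := by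
  rw [e_expand]; norm_num [show ((0:ZMod 4)*0).val = 0 by decide,
    show ((0:ZMod 4)*1).val = 0 by decide, show ((0:ZMod 4)*2).val = 0 by decide,
    show ((0:ZMod 4)*3).val = 0 by decide]

lemma e1' : e 1 = (4:ℂ)⁻¹ • ((1:ℂ)•(1:H2) + Complex.I•K + (-1:ℂ)•K^2 + (-Complex.I)•K^3) := by
  rw [e_expand]; norm_num [show ((1:ZMod 4)*0).val = 0 by decide,
    show ((1:ZMod 4)*1).val = 1 by decide, show ((1:ZMod 4)*2).val = 2 by decide,
    show ((1:ZMod 4)*3).val = 3 by decide, zv0, zv1, zv2, zv3, zv4, zv6, zv9, pow_succ, Complex.I_sq]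
  try module

lemma e2' : e 2 = (4:ℂ)⁻¹ • ((1:ℂ)•(1:H2) + (-1:ℂ)•K + (1:ℂ)•K^2 + (-1:ℂ)•K^3) := by
  rw [e_expand]; norm_num [show ((2:ZMod 4)*0).val = 0 by decide,
    show ((2:ZMod 4)*1).val = 2 by decide, show ((2:ZMod 4)*2).val = 0 by decide,
    show ((2:ZMod 4)*3).val = 2 by decide, zv0, zv1, zv2, zv3, zv4, zv6, zv9, pow_succ, Complex.I_sq]
  try module

lemma e3' : e 3 = (4:ℂ)⁻¹ • ((1:ℂ)•(1:H2) + (-Complex.I)•K + (-1:ℂ)•K^2 + Complex.I•K^3) := by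
  rw [e_expand]; norm_num [show ((3:ZMod 4)*0).val = 0 by decide,
    show ((3:ZMod 4)*1).val = 3 by decide, show ((3:ZMod 4)*2).val = 2 by decide,
    show ((3:ZMod 4)*3).val = 1 by decide, zv0, zv1, zv2, zv3, zv4, zv6, zv9, pow_succ, Complex.I_sq]
  try module

lemma hK4 : (K:H2)^4 = 1 := by
  have := RingQuot.mkAlgHom_rel ℂ rel.k4
  simpa [K, map_pow] using this

lemma hKE : K * E = -(E * K) := by
  have := RingQuot.mkAlgHom_rel ℂ rel.ke
  simp only [map_mul, map_neg] at this
  rw [K, E, this]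

lemma hEK : E * K = -(K * E) := by rw [hKE, neg_neg]

lemma hKF : K * F = -(F * K) := by
  have := RingQuot.mkAlgHom_rel ℂ rel.kf
  simp only [map_mul, map_neg] at this
  rw [K, F, this]

lemma hFK : F * K = -(K * F) := by rw [hKF, neg_neg]

lemma neg_as_smul (a : H2) : -a = (-1:ℂ) • a := by module

lemma p1 : K^3*E*K = -E := by
  rw [mul_assoc, hEK, neg_as_smul, mul_smul_comm, ← mul_assoc, ← pow_succ, hK4, one_mul,
    ← neg_as_smul]

lemma p2 : K^3*E*K^2 = K*E := by
  rw [pow_two, ← mul_assoc, p1, neg_as_smul, smul_mul_assoc, hEK, neg_as_smul, smul_smul]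
  norm_num

lemma p3 : K^3*E*K^3 = -(K^2*E) := by
  calc K^3*E*K^3 = (K^3*E*K^2)*K := by rw [mul_assoc (K^3*E) (K^2) K, ← pow_succ]
    _ = (K*E)*K := by rw [p2]
    _ = K*(E*K) := by rw [mul_assoc]
    _ = K*(-(K*E)) := by rw [hEK]
    _ = -(K^2*E) := by
        rw [neg_as_smul (K*E), mul_smul_comm, ← mul_assoc, ← pow_two, ← neg_as_smul]

lemma q1 : F*K^2 = K^2*F := by
  calc F*K^2 = (F*K)*K := by rw [mul_assoc, ← pow_two]
    _ = (-(K*F))*K := by rw [hFK]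
    _ = (-1:ℂ)•(K*(F*K)) := by rw [neg_as_smul (K*F), smul_mul_assoc, mul_assoc]
    _ = (-1:ℂ)•(K*(-(K*F))) := by rw [hFK]
    _ = K^2*F := by
        rw [neg_as_smul (K*F), mul_smul_comm, smul_smul,
          show ((-1:ℂ)*(-1)) = 1 by norm_num, one_smul, ← mul_assoc, ← pow_two]

lemma q3 : F*K^3 = -(K^3*F) := by
  calc F*K^3 = (F*K^2)*K := by rw [mul_assoc F (K^2) K, ← pow_succ]
    _ = (K^2*F)*K := by rw [q1]
    _ = K^2*(F*K) := by rw [mul_assoc]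
    _ = K^2*(-(K*F)) := by rw [hFK]
    _ = -(K^3*F) := by
        rw [neg_as_smul (K*F), mul_smul_comm, ← mul_assoc, ← pow_succ, ← neg_as_smul]

section S
variable (S : H2 →ₗ[ℂ] H2) (hS1 : S 1 = 1)
    (hSmul : ∀ x y : H2, S (x * y) = S y * S x)
    (hSK : S K = K ^ 3) (hSE : S E = -(K ^ 3 * E)) (hSF : S F = -(F * K))

include hSmul hSK in
lemma hSK2 : S (K^2) = K^2 := by
  nth_rewrite 1 [pow_two]
  rw [hSmul, hSK, ← pow_add]
  rw [show (3+3 : ℕ) = 4+2 from rfl, pow_add, hK4, one_mul]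

include hSmul hSK in
lemma hSK3 : S (K^3) = K := by
  rw [show (K:H2)^3 = K^2*K from pow_succ K 2, hSmul, hSK, hSK2 S hSmul hSK, ← pow_add]
  rw [show (3+2 : ℕ) = 4+1 from rfl, pow_add, hK4, one_mul, pow_one]

include hSmul hSK hSE in
lemma sE1 : S (K*E) = K^2*E := by
  rw [hSmul, hSE, hSK, neg_as_smul (K^3*E), smul_mul_assoc, p3, neg_as_smul (K^2*E),
    smul_smul, show ((-1:ℂ)*(-1)) = 1 by norm_num, one_smul]

include hSmul hSK hSE in
lemma sE2 : S (K^2*E) = -(K*E) := by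
  rw [hSmul, hSE, hSK2 S hSmul hSK, neg_as_smul (K^3*E), smul_mul_assoc, p2, ← neg_as_smul]

include hSmul hSK hSE in
lemma sE3 : S (K^3*E) = E := by
  rw [hSmul, hSE, hSK3 S hSmul hSK, neg_as_smul (K^3*E), smul_mul_assoc, p1,
    neg_as_smul E, smul_smul, show ((-1:ℂ)*(-1)) = 1 by norm_num, one_smul]

include hSF in
lemma sF0 : S F = K*F := by rw [hSF, hFK]; exact neg_neg _

include hSmul hSK hSF in
lemma sF1 : S (K*F) = -F := by
  rw [hSmul, sF0 S hSF, hSK, mul_assoc, q3, neg_as_smul (K^3*F), mul_smul_comm,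
    ← mul_assoc, ← pow_succ', hK4, one_mul, ← neg_as_smul]

include hSmul hSK hSF in
lemma sF2 : S (K^2*F) = K^3*F := by
  rw [hSmul, sF0 S hSF, hSK2 S hSmul hSK, mul_assoc, q1, ← mul_assoc, ← pow_succ']

include hSmul hSK hSF in
lemma sF3 : S (K^3*F) = -(K^2*F) := by
  rw [hSmul, sF0 S hSF, hSK3 S hSmul hSK, mul_assoc, hFK, neg_as_smul (K*F),
    mul_smul_comm, ← mul_assoc, ← pow_two, ← neg_as_smul]

end S

lemma I3 : Complex.I ^ 3 = -Complex.I := by simp [pow_succ]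

lemma mulE (a b c d : ℂ) : ((4:ℂ)⁻¹ • (a•(1:H2) + b•K + c•K^2 + d•K^3)) * E
    = (4:ℂ)⁻¹ • (a•E + b•(K*E) + c•(K^2*E) + d•(K^3*E)) := by
  simp only [smul_mul_assoc, add_mul, one_mul]

lemma mulF (a b c d : ℂ) : ((4:ℂ)⁻¹ • (a•(1:H2) + b•K + c•K^2 + d•K^3)) * F
    = (4:ℂ)⁻¹ • (a•F + b•(K*F) + c•(K^2*F) + d•(K^3*F)) := by
  simp only [smul_mul_assoc, add_mul, one_mul]

section S2
variable (S : H2 →ₗ[ℂ] H2) (hS1 : S 1 = 1)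
    (hSmul : ∀ x y : H2, S (x * y) = S y * S x)
    (hSK : S K = K ^ 3) (hSE : S E = -(K ^ 3 * E)) (hSF : S F = -(F * K))

include hS1 hSmul hSK in
lemma S_comb (a b c d : ℂ) : S ((4:ℂ)⁻¹ • (a•(1:H2) + b•K + c•K^2 + d•K^3))
    = (4:ℂ)⁻¹ • (a•(1:H2) + d•K + c•K^2 + b•K^3) := by
  simp only [map_smul, map_add, hS1, hSK, hSK2 S hSmul hSK, hSK3 S hSmul hSK]
  module

include hSmul hSK hSE in
lemma S_combE (a b c d : ℂ) : S ((4:ℂ)⁻¹ • (a•E + b•(K*E) + c•(K^2*E) + d•(K^3*E)))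
    = (4:ℂ)⁻¹ • (d•E + (-c)•(K*E) + b•(K^2*E) + (-a)•(K^3*E)) := by
  simp only [map_smul, map_add, hSE, sE1 S hSmul hSK hSE, sE2 S hSmul hSK hSE,
    sE3 S hSmul hSK hSE, neg_as_smul (K^3*E), neg_as_smul (K*E)]
  module

include hSmul hSK hSF in
lemma S_combF (a b c d : ℂ) : S ((4:ℂ)⁻¹ • (a•F + b•(K*F) + c•(K^2*F) + d•(K^3*F)))
    = (4:ℂ)⁻¹ • ((-b)•F + a•(K*F) + (-d)•(K^2*F) + c•(K^3*F)) := by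
  simp only [map_smul, map_add, sF0 S hSF, sF1 S hSmul hSK hSF, sF2 S hSmul hSK hSF,
    sF3 S hSmul hSK hSF, neg_as_smul F, neg_as_smul (K^2*F)]
  module

include hS1 hSmul hSK hSE hSF in
lemma case0 :
      S (e 0) = e (-0) ∧
      S (e 0 * E) = (-Complex.I) ^ (0:ZMod 4).val • (e (2 - 0) * E) ∧
      S (e 0 * F) = -(Complex.I ^ (0:ZMod 4).val • (e (2 - 0) * F)) := by
  refine ⟨?_, ?_, ?_⟩
  · rw [show (-0 : ZMod 4) = 0 by decide]
    simp only [e0', e1', e2', e3']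
    rw [S_comb S hS1 hSmul hSK]
  · rw [show (2 - 0 : ZMod 4) = 2 by decide, zv0]
    simp only [e0', e1', e2', e3']
    simp only [mulE]
    rw [S_combE S hSmul hSK hSE]
    match_scalars <;> (try ring_nf) <;> (try simp [Complex.I_sq, I3, pow_succ, Complex.I_mul_I]) <;> (try ring)
  · rw [show (2 - 0 : ZMod 4) = 2 by decide, zv0]
    simp only [e0', e1', e2', e3']
    simp only [mulF]
    rw [S_combF S hSmul hSK hSF, neg_as_smul]
    match_scalars <;> (try ring_nf) <;> (try simp [Complex.I_sq, I3, pow_succ, Complex.I_mul_I]) <;> (try ring)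

include hS1 hSmul hSK hSE hSF in
lemma case1 :
      S (e 1) = e (-1) ∧
      S (e 1 * E) = (-Complex.I) ^ (1:ZMod 4).val • (e (2 - 1) * E) ∧
      S (e 1 * F) = -(Complex.I ^ (1:ZMod 4).val • (e (2 - 1) * F)) := by
  refine ⟨?_, ?_, ?_⟩
  · rw [show (-1 : ZMod 4) = 3 by decide]
    simp only [e0', e1', e2', e3']
    rw [S_comb S hS1 hSmul hSK]
  · rw [show (2 - 1 : ZMod 4) = 1 by decide, zv1]
    simp only [e0', e1', e2', e3']
    simp only [mulE]
    rw [S_combE S hSmul hSK hSE]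
    match_scalars <;> (try ring_nf) <;> (try simp [Complex.I_sq, I3, pow_succ, Complex.I_mul_I]) <;> (try ring)
  · rw [show (2 - 1 : ZMod 4) = 1 by decide, zv1]
    simp only [e0', e1', e2', e3']
    simp only [mulF]
    rw [S_combF S hSmul hSK hSF, neg_as_smul]
    match_scalars <;> (try ring_nf) <;> (try simp [Complex.I_sq, I3, pow_succ, Complex.I_mul_I]) <;> (try ring)

include hS1 hSmul hSK hSE hSF in
lemma case2 :
      S (e 2) = e (-2) ∧
      S (e 2 * E) = (-Complex.I) ^ (2:ZMod 4).val • (e (2 - 2) * E) ∧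
      S (e 2 * F) = -(Complex.I ^ (2:ZMod 4).val • (e (2 - 2) * F)) := by
  refine ⟨?_, ?_, ?_⟩
  · rw [show (-2 : ZMod 4) = 2 by decide]
    simp only [e0', e1', e2', e3']
    rw [S_comb S hS1 hSmul hSK]
  · rw [show (2 - 2 : ZMod 4) = 0 by decide, zv2]
    simp only [e0', e1', e2', e3']
    simp only [mulE]
    rw [S_combE S hSmul hSK hSE]
    match_scalars <;> (try ring_nf) <;> (try simp [Complex.I_sq, I3, pow_succ, Complex.I_mul_I]) <;> (try ring)
  · rw [show (2 - 2 : ZMod 4) = 0 by decide, zv2]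
    simp only [e0', e1', e2', e3']
    simp only [mulF]
    rw [S_combF S hSmul hSK hSF, neg_as_smul]
    match_scalars <;> (try ring_nf) <;> (try simp [Complex.I_sq, I3, pow_succ, Complex.I_mul_I]) <;> (try ring)

include hS1 hSmul hSK hSE hSF in
lemma case3 :
      S (e 3) = e (-3) ∧
      S (e 3 * E) = (-Complex.I) ^ (3:ZMod 4).val • (e (2 - 3) * E) ∧
      S (e 3 * F) = -(Complex.I ^ (3:ZMod 4).val • (e (2 - 3) * F)) := by
  refine ⟨?_, ?_, ?_⟩
  · rw [show (-3 : ZMod 4) = 1 by decide]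
    simp only [e0', e1', e2', e3']
    rw [S_comb S hS1 hSmul hSK]
  · rw [show (2 - 3 : ZMod 4) = 3 by decide, zv3]
    simp only [e0', e1', e2', e3']
    simp only [mulE]
    rw [S_combE S hSmul hSK hSE]
    match_scalars <;> (try ring_nf) <;> (try simp [Complex.I_sq, I3, pow_succ, Complex.I_mul_I]) <;> (try ring)
  · rw [show (2 - 3 : ZMod 4) = 3 by decide, zv3]
    simp only [e0', e1', e2', e3']
    simp only [mulF]
    rw [S_combF S hSmul hSK hSF, neg_as_smul]
    match_scalars <;> (try ring_nf) <;> (try simp [Complex.I_sq, I3, pow_succ, Complex.I_mul_I]) <;> (try ring)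

end S2

/-- The antipode `S` of `H_2^i` (antimultiplicative linear, `S(K) = K⁻¹ = K³`,
`S(E) = -K⁻¹E`, `S(F) = -FK`) satisfies `S(e_m) = e_{-m}`,
`S(e_mE) = (-i)^m e_{2-m}E` and `S(e_mF) = -(i)^m e_{2-m}F` for all `m ∈ ℤ/4ℤ`. -/
theorem antipode_values (S : H2 →ₗ[ℂ] H2) (hS1 : S 1 = 1)
    (hSmul : ∀ x y : H2, S (x * y) = S y * S x)
    (hSK : S K = K ^ 3) (hSE : S E = -(K ^ 3 * E)) (hSF : S F = -(F * K)) :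
    ∀ m : ZMod 4,
      S (e m) = e (-m) ∧
      S (e m * E) = (-Complex.I) ^ m.val • (e (2 - m) * E) ∧
      S (e m * F) = -(Complex.I ^ m.val • (e (2 - m) * F)) := by
  intro m
  fin_cases m
  · exact case0 S hS1 hSmul hSK hSE hSF
  · exact case1 S hS1 hSmul hSK hSE hSF
  · exact case2 S hS1 hSmul hSK hSE hSF
  · exact case3 S hS1 hSmul hSK hSE hSF

end Stmt17
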